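/- arXiv:1804.08070 — 2 statements merged into one kernel-verified Lean document; each statement's English description precedes it below -/
import Mathlib

section
/- Let α ∈ (1,2), σ₂ > 0, a, σ₁ ≥ 0 with a − σ₁²/2 > 0, and let γ₀ < 0. Suppose Δt > 0 satisfies 1 + σ₂γ₀Δt/α > 0 and a − σ₁²/2 + σ₂γ₀(1 − 1/α) > 0. Then for every x ≥ 0 and every z ≥ γ₀Δt, one has x + (a − σ₁²/2)Δt + σ₂·x^{1/α}·z ≥ x + (a − σ₁²/2 + σ₂ x^{1/α} γ₀)Δt ≥ (1 + σ₂γ₀Δt/α)x + (a − σ₁²/2 + σ₂γ₀(1 − 1/α))Δt > 0; in particular x + (a − σ₁²/2)Δt + σ₂·x^{1/α}·z > 0. -/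
open Real

theorem discriminant_positive_finite_variation
    (α σ₁ σ₂ a γ₀ Δt x z : ℝ)
    (hα : 1 < α) (hα2 : α < 2) (hσ₂ : 0 < σ₂) (ha : 0 ≤ a) (hσ₁ : 0 ≤ σ₁)
    (ha' : 0 < a - σ₁ ^ 2 / 2) (hγ : γ₀ < 0) (hΔt : 0 < Δt)
    (h1 : 0 < 1 + σ₂ * γ₀ * Δt / α)
    (h2 : 0 < a - σ₁ ^ 2 / 2 + σ₂ * γ₀ * (1 - 1 / α))
    (hx : 0 ≤ x) (hz : γ₀ * Δt ≤ z) :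
    x + (a - σ₁ ^ 2 / 2) * Δt + σ₂ * x ^ (1 / α) * z ≥
        x + (a - σ₁ ^ 2 / 2 + σ₂ * x ^ (1 / α) * γ₀) * Δt ∧
    x + (a - σ₁ ^ 2 / 2 + σ₂ * x ^ (1 / α) * γ₀) * Δt ≥
        (1 + σ₂ * γ₀ * Δt / α) * x + (a - σ₁ ^ 2 / 2 + σ₂ * γ₀ * (1 - 1 / α)) * Δt ∧
    0 < (1 + σ₂ * γ₀ * Δt / α) * x + (a - σ₁ ^ 2 / 2 + σ₂ * γ₀ * (1 - 1 / α)) * Δt ∧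
    0 < x + (a - σ₁ ^ 2 / 2) * Δt + σ₂ * x ^ (1 / α) * z := by
  have hα0 : (0:ℝ) < α := by linarith
  have hxp : 0 ≤ x ^ (1 / α) := Real.rpow_nonneg hx _
  -- convexity: x^(1/α) ≤ 1 + (1/α)*(x-1)
  have hconv : x ^ (1 / α) ≤ 1 + (1 / α) * (x - 1) := by
    have := rpow_one_add_le_one_add_mul_self (s := x - 1) (by linarith)
      (p := 1 / α) (by positivity) (by rw [div_le_one hα0]; linarith)
    simpa using this
  have hA : x + (a - σ₁ ^ 2 / 2) * Δt + σ₂ * x ^ (1 / α) * z ≥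
      x + (a - σ₁ ^ 2 / 2 + σ₂ * x ^ (1 / α) * γ₀) * Δt := by
    have : σ₂ * x ^ (1 / α) * (γ₀ * Δt) ≤ σ₂ * x ^ (1 / α) * z :=
      mul_le_mul_of_nonneg_left hz (by positivity)
    nlinarith
  have hB : x + (a - σ₁ ^ 2 / 2 + σ₂ * x ^ (1 / α) * γ₀) * Δt ≥
      (1 + σ₂ * γ₀ * Δt / α) * x + (a - σ₁ ^ 2 / 2 + σ₂ * γ₀ * (1 - 1 / α)) * Δt := by
    have key : σ₂ * γ₀ * Δt * (1 + (1 / α) * (x - 1)) ≤ σ₂ * γ₀ * Δt * x ^ (1 / α) := by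
      apply mul_le_mul_of_nonpos_left hconv
      have : σ₂ * γ₀ < 0 := mul_neg_of_pos_of_neg hσ₂ hγ
      nlinarith
    rw [ge_iff_le, ← sub_nonneg]
    have : x + (a - σ₁ ^ 2 / 2 + σ₂ * x ^ (1 / α) * γ₀) * Δt - ((1 + σ₂ * γ₀ * Δt / α) * x + (a - σ₁ ^ 2 / 2 + σ₂ * γ₀ * (1 - 1 / α)) * Δt) = σ₂ * γ₀ * Δt * x ^ (1 / α) - σ₂ * γ₀ * Δt * (1 + 1 / α * (x - 1)) := by ring
    rw [this]
    linarith [key]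
  have hC : 0 < (1 + σ₂ * γ₀ * Δt / α) * x + (a - σ₁ ^ 2 / 2 + σ₂ * γ₀ * (1 - 1 / α)) * Δt :=
    add_pos_of_nonneg_of_pos (mul_nonneg h1.le hx) (mul_pos h2 hΔt)
  exact ⟨hA, hB, hC, lt_of_lt_of_le (lt_of_lt_of_le hC hB) hA⟩
end

section
/- Suppose the measure ν on (0,∞) satisfies ∫₀^∞ min(z, z²) ν(dz) < ∞. Let φ be the Yamada–Watanabe function for parameters ε ∈ (0,1), δ ∈ (1,∞). Then for any x ∈ ℝ, y ∈ ℝ\{0} with xy ≥ 0 and any u > 0: ∫₀^∞ [φ(y + xz) − φ(y) − xz·φ'(y)] ν(dz) ≤ 2·𝟙_{(0,ε]}(|y|)·[ (|x|²/log δ)·min(1/|y|, δ/ε)·∫₀^u z² ν(dz) + |x|·∫_u^∞ z ν(dz) ]. -/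
open Real MeasureTheory intervalIntegral

set_option maxHeartbeats 1000000 in
theorem yamada_watanabe_jump_estimate_same_sign
    (ε δ : ℝ) (hε : ε ∈ Set.Ioo (0 : ℝ) 1) (hδ : δ ∈ Set.Ioi (1 : ℝ))
    (ψ : ℝ → ℝ) (hψcont : Continuous ψ) (hψnonneg : ∀ z, 0 ≤ ψ z)
    (hψsupp : ∀ z, z ∉ Set.Icc (ε / δ) ε → ψ z = 0)
    (hψint : ∫ z in (ε / δ)..ε, ψ z = 1)
    (hψbound : ∀ z > (0 : ℝ), ψ z ≤ 2 / (z * Real.log δ))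
    (φ φ' : ℝ → ℝ)
    (hφ : ∀ x, φ x = ∫ y in (0 : ℝ)..|x|, ∫ z in (0 : ℝ)..y, ψ z)
    (hderiv : ∀ x, HasDerivAt φ (φ' x) x)
    (ν : Measure ℝ)
    (hν : Integrable (fun z => min z (z ^ 2)) (ν.restrict (Set.Ioi (0 : ℝ))))
    (x y u : ℝ) (hy : y ≠ 0) (hxy : 0 ≤ x * y) (hu : 0 < u) :
    ∫ z in Set.Ioi (0 : ℝ), (φ (y + x * z) - φ y - x * z * φ' y) ∂ν ≤
      2 * Set.indicator (Set.Ioc (0 : ℝ) ε) (fun _ => (1 : ℝ)) |y| *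
        ((|x| ^ 2 / Real.log δ) * min (1 / |y|) (δ / ε) *
            ∫ z in Set.Ioc (0 : ℝ) u, z ^ 2 ∂ν +
          |x| * ∫ z in Set.Ioi u, z ∂ν) := by
  obtain ⟨hε0, hε1⟩ := hε
  have hδ1 : (1:ℝ) < δ := hδ
  have hδ0 : (0:ℝ) < δ := lt_trans one_pos hδ1
  have hL : 0 < Real.log δ := Real.log_pos hδ1
  have hεδ : 0 < ε / δ := div_pos hε0 hδ0
  set F : ℝ → ℝ := fun s => ∫ z in (0:ℝ)..s, ψ z with hFdef
  set G : ℝ → ℝ := fun s => ∫ t in (0:ℝ)..s, F t with hGdef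
  have hψii : ∀ a b : ℝ, IntervalIntegrable ψ volume a b :=
    fun a b => hψcont.intervalIntegrable a b
  have hFderiv : ∀ s : ℝ, HasDerivAt F (ψ s) s :=
    fun s => (hψcont.integral_hasStrictDerivAt 0 s).hasDerivAt
  have hFcont : Continuous F :=
    (Differentiable.continuous (fun s => (hFderiv s).differentiableAt))
  have hFii : ∀ a b : ℝ, IntervalIntegrable F volume a b :=
    fun a b => hFcont.intervalIntegrable a b
  have hGderiv : ∀ s : ℝ, HasDerivAt G (F s) s :=
    fun s => (hFcont.integral_hasStrictDerivAt 0 s).hasDerivAt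
  have hGcont : Continuous G :=
    (Differentiable.continuous (fun s => (hGderiv s).differentiableAt))
  have hφeq : ∀ t : ℝ, φ t = G |t| := by
    intro t
    simp only [hGdef, hFdef]
    exact hφ t
  have hFsub : ∀ p q : ℝ, F q - F p = ∫ z in p..q, ψ z := fun p q =>
    intervalIntegral.integral_interval_sub_left (hψii 0 q) (hψii 0 p)
  have hFmono : ∀ p q : ℝ, p ≤ q → F p ≤ F q := by
    intro p q hpq
    have h := hFsub p q
    have h2 : 0 ≤ ∫ z in p..q, ψ z :=
      intervalIntegral.integral_nonneg hpq (fun t _ => hψnonneg t)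
    linarith
  have hF0 : F 0 = 0 := intervalIntegral.integral_same
  have hFnn : ∀ s : ℝ, 0 ≤ s → 0 ≤ F s := by
    intro s hs; rw [← hF0]; exact hFmono 0 s hs
  have hFε : F ε = 1 := by
    have h0 : ∫ z in (0:ℝ)..(ε/δ), ψ z = 0 := by
      rw [intervalIntegral.integral_of_le hεδ.le, MeasureTheory.integral_Ioc_eq_integral_Ioo,
        MeasureTheory.setIntegral_congr_fun measurableSet_Ioo
          (g := fun _ => (0:ℝ)) (fun t ht => hψsupp t (fun hmem => absurd hmem.1 (not_le.mpr ht.2)))]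
      simp
    have hadd := intervalIntegral.integral_add_adjacent_intervals (hψii 0 (ε/δ)) (hψii (ε/δ) ε)
    simp only [hFdef]
    rw [← hadd, h0, hψint]
    norm_num
  have hF1 : ∀ s : ℝ, ε ≤ s → F s = 1 := by
    intro s hs
    have h2 : ∫ z in ε..s, ψ z = 0 := by
      rw [intervalIntegral.integral_of_le hs,
        MeasureTheory.setIntegral_congr_fun measurableSet_Ioc
          (g := fun _ => (0:ℝ)) (fun t ht => hψsupp t (fun hmem => absurd hmem.2 (not_le.mpr ht.1)))]
      simp
    have h3 := hFsub ε s
    rw [h2] at h3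
    linarith [hFε]
  have hFle1 : ∀ s : ℝ, F s ≤ 1 := by
    intro s
    rcases le_total s ε with h | h
    · rw [← hFε]; exact hFmono s ε h
    · exact (hF1 s h).le
  have hφ'pos : ∀ t : ℝ, 0 < t → φ' t = F t := by
    intro t ht
    have hev : φ =ᶠ[nhds t] G := by
      filter_upwards [isOpen_Ioi.mem_nhds ht] with s hs
      rw [hφeq s, abs_of_pos hs]
    exact (hderiv t).unique ((hGderiv t).congr_of_eventuallyEq hev)
  have hφ'neg : ∀ t : ℝ, t < 0 → φ' t = -F (-t) := by
    intro t ht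
    have hc : HasDerivAt (fun s : ℝ => G (-s)) (F (-t) * (-1)) t :=
      (hGderiv (-t)).comp t (hasDerivAt_neg t)
    have hev : φ =ᶠ[nhds t] (fun s => G (-s)) := by
      filter_upwards [isOpen_Iio.mem_nhds ht] with s hs
      rw [hφeq s, abs_of_neg hs]
    have h := (hderiv t).unique (hc.congr_of_eventuallyEq hev)
    rw [h]; ring
  set b : ℝ := |y| with hbdef
  set c : ℝ := |x| with hcdef
  have hb : 0 < b := abs_pos.mpr hy
  have hc : 0 ≤ c := abs_nonneg x
  set M : ℝ := 2 / Real.log δ * min (1 / b) (δ / ε) with hMdef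
  have hmnn : 0 ≤ min (1 / b) (δ / ε) :=
    le_min (one_div_nonneg.mpr hb.le) (div_nonneg hδ0.le hε0.le)
  have hM0 : 0 ≤ M := mul_nonneg (div_nonneg (by norm_num) hL.le) hmnn
  have hψM : ∀ s : ℝ, b ≤ s → ψ s ≤ M := by
    intro s hs
    have hs0 : 0 < s := lt_of_lt_of_le hb hs
    rcases le_total (1/b) (δ/ε) with h | h
    · rw [hMdef, min_eq_left h]
      have h1 : ψ s ≤ 2 / (s * Real.log δ) := hψbound s hs0
      have h2 : 2 / (s * Real.log δ) ≤ 2 / (b * Real.log δ) :=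
        div_le_div_of_nonneg_left (by norm_num) (by positivity)
          (mul_le_mul_of_nonneg_right hs hL.le)
      have h3 : 2 / (b * Real.log δ) = 2 / Real.log δ * (1 / b) := by
        field_simp
      linarith
    · rw [hMdef, min_eq_right h]
      by_cases hsupp : s ∈ Set.Icc (ε/δ) ε
      · have h1 : ψ s ≤ 2 / (s * Real.log δ) := hψbound s hs0
        have h2 : 2 / (s * Real.log δ) ≤ 2 / ((ε/δ) * Real.log δ) :=
          div_le_div_of_nonneg_left (by norm_num) (by positivity)
            (mul_le_mul_of_nonneg_right hsupp.1 hL.le)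
        have h3 : 2 / ((ε/δ) * Real.log δ) = 2 / Real.log δ * (δ / ε) := by
          field_simp
        linarith
      · rw [hψsupp s hsupp]; positivity
  have hFM : ∀ t : ℝ, b ≤ t → F t - F b ≤ M * (t - b) := by
    intro t ht
    rw [hFsub b t]
    calc (∫ z in b..t, ψ z) ≤ ∫ _z in b..t, M :=
          intervalIntegral.integral_mono_on ht (hψii b t) intervalIntegrable_const
            (fun s hs => hψM s hs.1)
      _ = M * (t - b) := by rw [intervalIntegral.integral_const, smul_eq_mul]; ring
  have hDsub : ∀ a : ℝ, (∫ t in b..(b+a), F t) - a * F b = ∫ t in b..(b+a), (F t - F b) := by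
    intro a
    rw [intervalIntegral.integral_sub (hFii b (b+a)) intervalIntegrable_const,
      intervalIntegral.integral_const, smul_eq_mul]
    ring
  have hD0 : ∀ a : ℝ, 0 ≤ a → 0 ≤ (∫ t in b..(b+a), F t) - a * F b := by
    intro a ha
    rw [hDsub]
    exact intervalIntegral.integral_nonneg (by linarith)
      (fun t ht => sub_nonneg.mpr (hFmono b t ht.1))
  have hD1 : ∀ a : ℝ, 0 ≤ a → (∫ t in b..(b+a), F t) - a * F b ≤ a := by
    intro a ha
    rw [hDsub]
    calc (∫ t in b..(b+a), (F t - F b)) ≤ ∫ _t in b..(b+a), (1:ℝ) :=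
          intervalIntegral.integral_mono_on (by linarith)
            ((hFii b (b+a)).sub intervalIntegrable_const) intervalIntegrable_const
            (fun t _ => by have := hFle1 t; have := hFnn b hb.le; linarith)
      _ = a := by rw [intervalIntegral.integral_const, smul_eq_mul]; ring
  have hD2 : ∀ a : ℝ, 0 ≤ a → (∫ t in b..(b+a), F t) - a * F b ≤ M * a^2 / 2 := by
    intro a ha
    rw [hDsub]
    calc (∫ t in b..(b+a), (F t - F b)) ≤ ∫ t in b..(b+a), M * (t - b) :=
          intervalIntegral.integral_mono_on (by linarith)
            ((hFii b (b+a)).sub intervalIntegrable_const)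
            ((continuous_const.mul (continuous_id.sub continuous_const)).intervalIntegrable _ _)
            (fun t ht => hFM t ht.1)
      _ = M * a^2 / 2 := by
          rw [intervalIntegral.integral_const_mul]
          have hcs := intervalIntegral.integral_comp_sub_right (a := b) (b := b+a) (fun t => t) b
          rw [hcs, show b - b = (0:ℝ) by ring, show b + a - b = a by ring, integral_id]
          ring
  have hDε : ∀ a : ℝ, 0 ≤ a → ε ≤ b → (∫ t in b..(b+a), F t) - a * F b = 0 := by
    intro a ha hεb
    have h1 : (∫ t in b..(b+a), F t) = ∫ _t in b..(b+a), (1:ℝ) :=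
      intervalIntegral.integral_congr (fun t ht => by
        rw [Set.uIcc_of_le (by linarith : b ≤ b + a)] at ht
        exact hF1 t (le_trans hεb ht.1))
    rw [h1, intervalIntegral.integral_const, smul_eq_mul, hF1 b hεb]
    ring
  have hxsign : ∀ z : ℝ, 0 ≤ z → φ (y + x*z) - φ y - x*z*φ' y
      = (∫ t in b..(b + c*z), F t) - (c*z) * F b := by
    intro z hz
    rcases lt_or_gt_of_ne hy with hyneg | hypos
    · have hx : x ≤ 0 := by nlinarith
      have hb' : b = -y := hbdef.trans (abs_of_neg hyneg)
      have hc' : c = -x := hcdef.trans (abs_of_nonpos hx)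
      have hxz : x * z ≤ 0 := mul_nonpos_of_nonpos_of_nonneg hx hz
      have habs : |y + x*z| = b + c*z := by
        rw [abs_of_neg (by linarith : y + x*z < 0), hb', hc']; ring
      have h3 : φ' y = - F b := by rw [hφ'neg y hyneg, hb']
      have h4 : G (b + c*z) - G b = ∫ t in b..(b+c*z), F t :=
        intervalIntegral.integral_interval_sub_left (hFii 0 (b+c*z)) (hFii 0 b)
      rw [hφeq (y + x*z), habs, hφeq y, ← hbdef, h3, ← h4, hc']
      try ring
    · have hx : 0 ≤ x := by nlinarith
      have hb' : b = y := hbdef.trans (abs_of_pos hypos)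
      have hc' : c = x := hcdef.trans (abs_of_nonneg hx)
      have hxz : 0 ≤ x * z := mul_nonneg hx hz
      have habs : |y + x*z| = b + c*z := by
        rw [abs_of_pos (by linarith : 0 < y + x*z), hb', hc']
      have h3 : φ' y = F b := by rw [hφ'pos y hypos, hb']
      have h4 : G (b + c*z) - G b = ∫ t in b..(b+c*z), F t :=
        intervalIntegral.integral_interval_sub_left (hFii 0 (b+c*z)) (hFii 0 b)
      rw [hφeq (y + x*z), habs, hφeq y, ← hbdef, h3, ← h4, hc']
      try ring
  set f : ℝ → ℝ := fun z => φ (y + x * z) - φ y - x * z * φ' y with hfdef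
  have hφc : Continuous φ := by
    have h : φ = fun t => G |t| := funext hφeq
    rw [h]; exact hGcont.comp continuous_abs
  have hfcont : Continuous f := by
    rw [hfdef]
    exact ((hφc.comp (continuous_const.add (continuous_const.mul continuous_id))).sub
      continuous_const).sub ((continuous_const.mul continuous_id).mul continuous_const)
  have hfnn : ∀ z ∈ Set.Ioi (0:ℝ), 0 ≤ f z := by
    intro z hz
    have hz' : 0 < z := hz
    simp only [hfdef]
    rw [hxsign z hz'.le]
    exact hD0 _ (mul_nonneg hc hz'.le)
  have hf2 : ∀ z ∈ Set.Ioi (0:ℝ), f z ≤ c * z := by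
    intro z hz
    have hz' : 0 < z := hz
    simp only [hfdef]
    rw [hxsign z hz'.le]
    exact hD1 _ (mul_nonneg hc hz'.le)
  have hf1 : ∀ z ∈ Set.Ioi (0:ℝ), f z ≤ M * c^2 / 2 * z^2 := by
    intro z hz
    have hz' : 0 < z := hz
    simp only [hfdef]
    rw [hxsign z hz'.le]
    have h := hD2 (c*z) (mul_nonneg hc hz'.le)
    have heq : M * (c*z)^2 / 2 = M * c^2 / 2 * z^2 := by ring
    linarith
  have hmin : IntegrableOn (fun z => min z (z^2)) (Set.Ioi (0:ℝ)) ν := hν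
  set K : ℝ := max c (M * c^2 / 2) with hKdef
  have hK0 : 0 ≤ K := le_trans hc (le_max_left _ _)
  have hfint : IntegrableOn f (Set.Ioi (0:ℝ)) ν := by
    apply Integrable.mono' (hmin.const_mul K) hfcont.aestronglyMeasurable
    rw [MeasureTheory.ae_restrict_iff' measurableSet_Ioi]
    refine MeasureTheory.ae_of_all _ (fun z hz => ?_)
    have hz' : 0 < z := hz
    rw [Real.norm_eq_abs, abs_of_nonneg (hfnn z hz)]
    rcases le_total z (z^2) with h | h
    · rw [min_eq_left h]
      calc f z ≤ c * z := hf2 z hz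
        _ ≤ K * z := mul_le_mul_of_nonneg_right (le_max_left _ _) hz'.le
    · rw [min_eq_right h]
      calc f z ≤ M * c^2 / 2 * z^2 := hf1 z hz
        _ ≤ K * z^2 := mul_le_mul_of_nonneg_right (le_max_right _ _) (sq_nonneg z)
  have hz2 : IntegrableOn (fun z => z^2) (Set.Ioc (0:ℝ) u) ν := by
    apply Integrable.mono' ((hmin.mono_set Set.Ioc_subset_Ioi_self).const_mul (max 1 u))
      (continuous_pow 2).aestronglyMeasurable
    rw [MeasureTheory.ae_restrict_iff' measurableSet_Ioc]
    refine MeasureTheory.ae_of_all _ (fun z hz => ?_)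
    obtain ⟨hz0, hzu⟩ := hz
    rw [Real.norm_eq_abs, abs_of_nonneg (sq_nonneg z)]
    rcases le_total z 1 with h | h
    · have hmz : z^2 ≤ z := by nlinarith
      rw [min_eq_right hmz]
      nlinarith [le_max_left (1:ℝ) u, sq_nonneg z]
    · have hmz : z ≤ z^2 := by nlinarith
      rw [min_eq_left hmz]
      have h1 : z^2 ≤ u * z := by nlinarith
      have h2 : u * z ≤ max 1 u * z :=
        mul_le_mul_of_nonneg_right (le_max_right _ _) (by linarith)
      linarith
  have hz1 : IntegrableOn (fun z => z) (Set.Ioi u) ν := by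
    apply Integrable.mono' ((hmin.mono_set (Set.Ioi_subset_Ioi hu.le)).const_mul (max 1 (1/u)))
      aestronglyMeasurable_id
    rw [MeasureTheory.ae_restrict_iff' measurableSet_Ioi]
    refine MeasureTheory.ae_of_all _ (fun z hz => ?_)
    simp only [id_eq]
    have hz' : u < z := hz
    have hz0 : 0 < z := lt_trans hu hz'
    rw [Real.norm_eq_abs, abs_of_nonneg hz0.le]
    rcases le_total z 1 with h | h
    · have hmz : z^2 ≤ z := by nlinarith
      rw [min_eq_right hmz]
      have h1 : z ≤ 1/u * z^2 := by
        rw [one_div, inv_mul_eq_div, le_div_iff₀ hu]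
        nlinarith
      have h2 : 1/u * z^2 ≤ max 1 (1/u) * z^2 :=
        mul_le_mul_of_nonneg_right (le_max_right _ _) (sq_nonneg z)
      linarith
    · have hmz : z ≤ z^2 := by nlinarith
      rw [min_eq_left hmz]
      nlinarith [le_max_left (1:ℝ) (1/u)]
  have hsplit : (∫ z in Set.Ioi (0:ℝ), f z ∂ν)
      = (∫ z in Set.Ioc (0:ℝ) u, f z ∂ν) + ∫ z in Set.Ioi u, f z ∂ν := by
    rw [← (Set.Ioc_union_Ioi_eq_Ioi hu.le : Set.Ioc (0:ℝ) u ∪ Set.Ioi u = Set.Ioi 0)]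
    exact MeasureTheory.setIntegral_union (Set.Ioc_disjoint_Ioi le_rfl) measurableSet_Ioi
      (hfint.mono_set Set.Ioc_subset_Ioi_self) (hfint.mono_set (Set.Ioi_subset_Ioi hu.le))
  by_cases hbε : b ≤ ε
  · have hind : Set.indicator (Set.Ioc (0 : ℝ) ε) (fun _ => (1 : ℝ)) b = 1 :=
      Set.indicator_of_mem (Set.mem_Ioc.mpr ⟨hb, hbε⟩) _
    rw [hind]
    have hI1 : (∫ z in Set.Ioc (0:ℝ) u, f z ∂ν) ≤ ∫ z in Set.Ioc (0:ℝ) u, M * c^2 / 2 * z^2 ∂ν :=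
      setIntegral_mono_on (hfint.mono_set Set.Ioc_subset_Ioi_self) (hz2.const_mul _)
        measurableSet_Ioc (fun z hz => hf1 z (Set.mem_Ioi.mpr hz.1))
    have hI2 : (∫ z in Set.Ioi u, f z ∂ν) ≤ ∫ z in Set.Ioi u, c * z ∂ν :=
      setIntegral_mono_on (hfint.mono_set (Set.Ioi_subset_Ioi hu.le)) (hz1.const_mul c)
        measurableSet_Ioi (fun z hz => hf2 z (Set.mem_Ioi.mpr (lt_trans hu hz)))
    rw [MeasureTheory.integral_const_mul] at hI1 hI2
    have e1 : M * c^2 / 2 = c^2 / Real.log δ * min (1/b) (δ/ε) := by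
      rw [hMdef]; ring
    rw [e1] at hI1
    have hIz2 : 0 ≤ ∫ z in Set.Ioc (0:ℝ) u, z^2 ∂ν :=
      setIntegral_nonneg measurableSet_Ioc (fun z _ => sq_nonneg z)
    have hIz1 : 0 ≤ ∫ z in Set.Ioi u, z ∂ν :=
      setIntegral_nonneg measurableSet_Ioi (fun z hz => le_of_lt (lt_trans hu hz))
    have hP : 0 ≤ c^2 / Real.log δ * min (1/b) (δ/ε) * ∫ z in Set.Ioc (0:ℝ) u, z^2 ∂ν :=
      mul_nonneg (mul_nonneg (div_nonneg (sq_nonneg c) hL.le) hmnn) hIz2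
    have hQ : 0 ≤ c * ∫ z in Set.Ioi u, z ∂ν := mul_nonneg hc hIz1
    rw [hsplit]
    linarith
  · have hind : Set.indicator (Set.Ioc (0 : ℝ) ε) (fun _ => (1 : ℝ)) b = 0 :=
      Set.indicator_of_notMem (fun hmem => absurd hmem.2 hbε) _
    rw [hind]
    have hzero : (∫ z in Set.Ioi (0:ℝ), f z ∂ν) = 0 := by
      rw [MeasureTheory.setIntegral_congr_fun measurableSet_Ioi (g := fun _ => (0:ℝ))
        (fun z hz => by
          have hz' : 0 < z := hz
          simp only [hfdef]
          rw [hxsign z hz'.le]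
          exact hDε (c*z) (mul_nonneg hc hz'.le) (not_le.mp hbε).le)]
      simp
    rw [hzero]
    norm_num
end
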